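/- Let φ : A → B be a radical-preserving ring homomorphism such that J(B) is left T-nilpotent. Let M be a non-zero left A-module with projective cover f : P ↠ M. Then B ⊗_A M = 0 iff B ⊗_A P = 0, and B ⊗_A f is a projective cover of B ⊗_A M whenever B ⊗_A M ≠ 0. -/

import Mathlib

universe u

open Function CategoryTheory

/-! ### Ring-theoretic preliminaries -/

/-- The Jacobson radical of a ring (the intersection of all maximal left ideals). -/
def jac (R : Type u) [Ring R] : Ideal R := Ideal.jacobson (⊥ : Ideal R)

section Modules

variable (R : Type u) [Ring R] (M : Type u) [AddCommGroup M] [Module R M]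

/-- A submodule `N` of `M` is superfluous (small) if `N ⊔ L = M` implies `L = M`. -/
def Superfluous (N : Submodule R M) : Prop :=
  ∀ L : Submodule R M, N ⊔ L = ⊤ → L = ⊤

/-- The submodule `I • p` generated by the products of elements of a left ideal `I`
with elements of a submodule `p`. -/
def idealSMul (I : Ideal R) (p : Submodule R M) : Submodule R M :=
  Submodule.span R {x | ∃ a ∈ I, ∃ m ∈ p, x = a • m}

/-- The powers `J(R)^n • M` of the radical acting on a module. -/
def radPow : ℕ → Submodule R M
  | 0 => ⊤
  | n + 1 => idealSMul R M (jac R) (radPow n)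

/-- The Loewy length of a module: the least `n` with `J(R)^n M = 0` (`⊤` if none exists). -/
noncomputable def loewyLength : ℕ∞ :=
  sInf ((↑) '' {n : ℕ | radPow R M n = ⊥})

/-- A projective cover: a linear surjection from a projective module with superfluous kernel. -/
def IsProjectiveCover {P : Type u} [AddCommGroup P] [Module R P]
    (f : P →ₗ[R] M) : Prop :=
  Module.Projective R P ∧ Function.Surjective f ∧ Superfluous R P (LinearMap.ker f)

/-- A module is indecomposable if it is non-zero and admits no non-trivial
direct sum decomposition. -/
def IsIndecomposableModule : Prop :=
  Nontrivial M ∧ ∀ N₁ N₂ : Submodule R M, IsCompl N₁ N₂ → N₁ = ⊥ ∨ N₂ = ⊥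

/-- A submodule is indecomposable if it is non-zero and is not the direct sum of two
non-zero submodules. -/
def IsIndecomposableSubmodule (N : Submodule R M) : Prop :=
  N ≠ ⊥ ∧ ∀ N₁ N₂ : Submodule R M, N₁ ≤ N → N₂ ≤ N → N₁ ⊓ N₂ = ⊥ → N₁ ⊔ N₂ = N →
    N₁ = ⊥ ∨ N₂ = ⊥

end Modules

section Rings

variable (R : Type u) [Ring R]

/-- A ring is semilocal if it is semisimple modulo its Jacobson radical. -/
def IsSemilocalRing : Prop :=
  IsSemisimpleModule R (R ⧸ jac R)

/-- A ring is semiperfect if it is semilocal and idempotents lift modulo the radical. -/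
def IsSemiperfectRing : Prop :=
  IsSemilocalRing R ∧
    ∀ x : R, x * x - x ∈ jac R → ∃ e : R, IsIdempotentElem e ∧ e - x ∈ jac R

/-- A subset `T` of a ring is left T-nilpotent if every sequence in `T` has a
vanishing initial product `a 0 * a 1 * ⋯ * a n`. -/
def IsLeftTNilpotent {R : Type u} [Ring R] (T : Set R) : Prop :=
  ∀ a : ℕ → R, (∀ i, a i ∈ T) → ∃ n : ℕ, ((List.range (n + 1)).map a).prod = 0

/-- A ring is left perfect if it is semilocal with left T-nilpotent radical. -/
def IsLeftPerfectRing : Prop :=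
  IsSemilocalRing R ∧ IsLeftTNilpotent (jac R : Set R)

/-- `I ^ n = 0`: every product of `n` elements of `I` vanishes. -/
def IdealPowZero (I : Ideal R) (n : ℕ) : Prop :=
  ∀ a : ℕ → R, (∀ i, a i ∈ I) → ((List.range n).map a).prod = 0

/-- A ring is semiprimary if it is semilocal and its Jacobson radical is nilpotent. -/
def IsSemiprimaryRing' : Prop :=
  IsSemilocalRing R ∧ ∃ n : ℕ, IdealPowZero R (jac R) n

/-- A primitive idempotent: a non-zero idempotent admitting no non-trivial
decomposition into orthogonal idempotents. -/
def IsPrimitiveIdem (e : R) : Prop :=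
  IsIdempotentElem e ∧ e ≠ 0 ∧
    ∀ f g : R, IsIdempotentElem f → IsIdempotentElem g → f * g = 0 → g * f = 0 →
      f + g = e → f = 0 ∨ g = 0

/-- A complete set of primitive orthogonal idempotents. -/
def IsCompleteOrthogonalPrimitiveSet {ι : Type u} [Fintype ι] (e : ι → R) : Prop :=
  (∀ i, IsPrimitiveIdem R (e i)) ∧ (∀ i j, i ≠ j → e i * e j = 0) ∧ ∑ i, e i = 1

/-- A complete set of primitive orthogonal idempotents is basic if the corresponding
indecomposable projective modules `R e i` are pairwise non-isomorphic. -/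
def IsBasicSet {ι : Type u} [Fintype ι] (e : ι → R) : Prop :=
  IsCompleteOrthogonalPrimitiveSet R e ∧
    ∀ i j, Nonempty ((Ideal.span {e i}) ≃ₗ[R] (Ideal.span {e j})) → i = j

/-- A ring is basic if it admits a complete set of primitive orthogonal idempotents
that is basic. -/
def IsBasicRing : Prop :=
  ∃ (ι : Type u) (_ : Fintype ι) (e : ι → R), IsBasicSet R e

end Rings

/-! ### Homological dimensions -/

section Dim

variable (A : Type u) [Ring A]

/-- `projDimLE A n M`: the `A`-module `M` admits a projective resolution of length `≤ n`. -/
def projDimLE : ℕ → ModuleCat.{u} A → Prop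
  | 0, M => Projective M
  | n + 1, M => ∃ (K P : ModuleCat.{u} A) (f : K ⟶ P) (g : P ⟶ M),
      Projective P ∧ Function.Injective f ∧ Function.Surjective g ∧
      (∀ x, g (f x) = 0) ∧ (∀ y, g y = 0 → ∃ x, f x = y) ∧ projDimLE n K

/-- The projective dimension of a module, as an extended natural number. -/
noncomputable def projDim (M : ModuleCat.{u} A) : ℕ∞ :=
  sInf ((↑) '' {n : ℕ | projDimLE A n M})

/-- `injDimLE A n M`: the `A`-module `M` admits an injective coresolution of length `≤ n`. -/
def injDimLE : ℕ → ModuleCat.{u} A → Prop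
  | 0, M => Injective M
  | n + 1, M => ∃ (I C : ModuleCat.{u} A) (f : M ⟶ I) (g : I ⟶ C),
      Injective I ∧ Function.Injective f ∧ Function.Surjective g ∧
      (∀ x, g (f x) = 0) ∧ (∀ y, g y = 0 → ∃ x, f x = y) ∧ injDimLE n C

/-- The injective dimension of a module, as an extended natural number. -/
noncomputable def injDim (M : ModuleCat.{u} A) : ℕ∞ :=
  sInf ((↑) '' {n : ℕ | injDimLE A n M})

/-- The left global dimension of a ring. -/
noncomputable def glDim : ℕ∞ :=
  ⨆ M : ModuleCat.{u} A, projDim A M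

/-- The little finitistic dimension: the supremum of the projective dimensions of
finitely generated left modules of finite projective dimension. -/
noncomputable def finDim : ℕ∞ :=
  ⨆ (M : ModuleCat.{u} A) (_ : Module.Finite A M ∧ projDim A M ≠ ⊤), projDim A M

/-- The big finitistic dimension: the supremum of the projective dimensions of
all left modules of finite projective dimension. -/
noncomputable def FinDim : ℕ∞ :=
  ⨆ (M : ModuleCat.{u} A) (_ : projDim A M ≠ ⊤), projDim A M

end Dim

/-! ### Induction along a ring homomorphism -/

section Tensor

variable {A B : Type u} [Ring A] [Ring B] (φ : A →+* B)

/-- The relations defining `B ⊗_A M` inside `B ⊗_ℤ M`. -/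
def TensorRel (M : Type u) [AddCommGroup M] [Module A M] :
    Submodule B (TensorProduct ℤ B M) :=
  Submodule.span B
    {x | ∃ (b : B) (a : A) (m : M), x = (b * φ a) ⊗ₜ[ℤ] m - b ⊗ₜ[ℤ] (a • m)}

/-- The induced module `B ⊗_A M` along a ring homomorphism `φ : A →+* B`, realized
as the quotient of `B ⊗_ℤ M` by the bilinearity relations for the `A`-actions. -/
def TensorB (M : Type u) [AddCommGroup M] [Module A M] : Type u :=
  TensorProduct ℤ B M ⧸ TensorRel φ M

noncomputable instance (M : Type u) [AddCommGroup M] [Module A M] :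
    AddCommGroup (TensorB φ M) :=
  inferInstanceAs (AddCommGroup (TensorProduct ℤ B M ⧸ TensorRel φ M))

noncomputable instance (M : Type u) [AddCommGroup M] [Module A M] :
    Module B (TensorB φ M) :=
  inferInstanceAs (Module B (TensorProduct ℤ B M ⧸ TensorRel φ M))

/-- The map induced on `B ⊗_ℤ ·` by an `A`-linear map `f`. -/
noncomputable def tmapAux {M N : Type u} [AddCommGroup M] [Module A M]
    [AddCommGroup N] [Module A N] (f : M →ₗ[A] N) :
    TensorProduct ℤ B M →ₗ[B] TensorProduct ℤ B N :=
  TensorProduct.AlgebraTensorModule.map (LinearMap.id : B →ₗ[B] B)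
    f.toAddMonoidHom.toIntLinearMap

/-- The induction functor on morphisms: `B ⊗_A f : B ⊗_A M →ₗ[B] B ⊗_A N`. -/
noncomputable def tmap {M N : Type u} [AddCommGroup M] [Module A M]
    [AddCommGroup N] [Module A N] (f : M →ₗ[A] N) :
    TensorB φ M →ₗ[B] TensorB φ N :=
  Submodule.mapQ (TensorRel φ M) (TensorRel φ N) (tmapAux (B := B) f) (by
    rw [TensorRel, Submodule.span_le]
    rintro x ⟨b, a, m, rfl⟩
    have : (tmapAux (B := B) f) ((b * φ a) ⊗ₜ[ℤ] m - b ⊗ₜ[ℤ] (a • m)) =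
        (b * φ a) ⊗ₜ[ℤ] (f m) - b ⊗ₜ[ℤ] (a • f m) := by
      simp [tmapAux, map_smul]
    rw [SetLike.mem_coe, Submodule.mem_comap, this]
    exact Submodule.subset_span ⟨b, a, f m, rfl⟩)

/-- `torVanish φ n M` encodes the vanishing `Tor_{n+1}^A(B, M) = 0`, via dimension
shifting through short exact sequences `0 → K → P → M → 0` with `P` projective. -/
def torVanish : ℕ → ModuleCat.{u} A → Prop
  | 0, M => ∀ (K P : ModuleCat.{u} A) (f : K ⟶ P) (g : P ⟶ M),
      Projective P → Function.Injective f → Function.Surjective g →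
      (∀ x, g (f x) = 0) → (∀ y, g y = 0 → ∃ x, f x = y) →
      Function.Injective (tmap φ f.hom)
  | n + 1, M => ∀ (K P : ModuleCat.{u} A) (f : K ⟶ P) (g : P ⟶ M),
      Projective P → Function.Injective f → Function.Surjective g →
      (∀ x, g (f x) = 0) → (∀ y, g y = 0 → ∃ x, f x = y) →
      torVanish n K

/-- The flat dimension of `B` as a right `A`-module along `φ`, characterized by Tor
vanishing: `flatdim B_A ≤ d` iff `Tor_n^A(B, M) = 0` for all `n > d` and all left
`A`-modules `M`. -/
noncomputable def flatDimR : ℕ∞ :=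
  sInf ((↑) '' {d : ℕ | ∀ (M : ModuleCat.{u} A) (n : ℕ), d ≤ n → torVanish φ n M})

/-- `B` as a right `A`-module (i.e. a left `Aᵐᵒᵖ`-module) via `φ`. -/
noncomputable def rightModule : Module Aᵐᵒᵖ B :=
  Module.compHom B (RingHom.op φ)

/-- The projective dimension of `B` as a right `A`-module via `φ`. -/
noncomputable def pdBA : ℕ∞ :=
  letI := rightModule φ
  projDim Aᵐᵒᵖ (ModuleCat.of Aᵐᵒᵖ B)

/-! The kernel of a projective cover `f : P ↠ M` is superfluous, hence lies in the radical of `P`,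
which for projective `P` is `J(A) P`. Induction is right exact, so `ker (B ⊗ f)` is generated by
`1 ⊗ ker f`, which lies in `J(B) (B ⊗ P)` because `φ` preserves radicals. Since `J(B)` is left
T-nilpotent, Bass's Nakayama lemma makes `J(B) N` superfluous in every `B`-module `N`. Hence
`B ⊗ f` is a projective cover, and if `B ⊗ M = 0` then the superfluous submodule
`ker (B ⊗ f) = B ⊗ P` must vanish. -/

theorem jac_eq_jacobson (R : Type u) [Ring R] : jac R = Ring.jacobson R :=
  Ideal.jacobson_bot

namespace Superfluous

variable {R : Type u} [Ring R] {M : Type u} [AddCommGroup M] [Module R M]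

theorem mono {N N' : Submodule R M} (hN' : Superfluous R M N') (h : N ≤ N') :
    Superfluous R M N := fun L hL =>
  hN' L (eq_top_iff.mpr (hL ▸ sup_le_sup_right h L))

theorem le_jacobson {N : Submodule R M} (hN : Superfluous R M N) :
    N ≤ Module.jacobson R M := by
  refine le_sInf fun m hm => ?_
  rcases hm.le_iff.mp (le_sup_right : m ≤ N ⊔ m) with htop | heq
  · exact absurd (hN m htop) hm.1
  · exact heq ▸ le_sup_left

end Superfluous

theorem Module.Projective.jacobson_le_jacobson_smul_top {R P : Type u} [Ring R]
    [AddCommGroup P] [Module R P] (hP : Module.Projective R P) :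
    Module.jacobson R P ≤ Ring.jacobson R • ⊤ := by
  obtain ⟨s, hs⟩ := Module.projective_def.mp hP
  intro k hk
  have hcoeff (p : P) : s k p ∈ Ring.jacobson R :=
    Module.le_comap_jacobson (Finsupp.lapply p ∘ₗ s) hk
  rw [← hs k, Finsupp.linearCombination_apply]
  exact Submodule.sum_mem _ fun p _ => Submodule.smul_mem_smul (hcoeff p) trivial

namespace IsLeftTNilpotent

variable {R : Type u} [Ring R] {J : Ideal R} {N : Type u} [AddCommGroup N] [Module R N]

theorem subsingleton_of_top_le_smul_top (hJ : IsLeftTNilpotent (J : Set R))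
    (h : (⊤ : Submodule R N) ≤ J • ⊤) : Subsingleton N := by
  rw [← not_nontrivial_iff_subsingleton]
  intro _
  obtain ⟨n, hn⟩ := exists_ne (0 : N)
  have step (b : R) (m : N) (hbm : b • m ≠ 0) :
      ∃ j ∈ J, ∃ m' : N, (b * j) • m' ≠ 0 := by
    by_contra! hb
    refine hbm (Submodule.smul_induction_on (p := fun x => b • x = 0) (h trivial)
      (fun j hj m' _ => by rw [smul_smul]; exact hb j hj m') fun x y hx hy => ?_)
    rw [smul_add, hx, hy, add_zero]
  -- Iterating `step` from `1 • n` yields partial products `a₀ ⋯ aₖ` of elements of `J`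
  -- that never vanish, contradicting T-nilpotency.
  let S := {p : R × N // p.1 • p.2 ≠ 0}
  choose j hj m' hm' using fun p : S => step p.1.1 p.1.2 p.2
  let next : S → S := fun p => ⟨(p.1.1 * j p, m' p), hm' p⟩
  let seq : ℕ → S := fun k => next^[k] ⟨(1, n), by simpa using hn⟩
  have hprod (k : ℕ) : (seq k).1.1 = ((List.range k).map fun i => j (seq i)).prod := by
    induction k with
    | zero => simp [seq]
    | succ k ih =>
      rw [List.range_succ, List.map_append, List.prod_append, ← ih]
      simp only [seq, Function.iterate_succ_apply', List.map_singleton, List.prod_singleton]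
      rfl
  obtain ⟨k, hk⟩ := hJ (fun i => j (seq i)) fun i => hj _
  exact (seq (k + 1)).2 (by rw [hprod, hk, zero_smul])

theorem superfluous_smul_top (hJ : IsLeftTNilpotent (J : Set R)) :
    Superfluous R N (J • ⊤) := by
  intro L hL
  rw [← Submodule.Quotient.subsingleton_iff]
  refine hJ.subsingleton_of_top_le_smul_top ?_
  have := congrArg (Submodule.map L.mkQ) hL
  rw [Submodule.map_sup, Submodule.map_smul'', Submodule.map_top, Submodule.range_mkQ,
    Submodule.mkQ_map_self, sup_bot_eq] at this
  exact this.ge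

end IsLeftTNilpotent

namespace TensorB

variable {A B : Type u} [Ring A] [Ring B] (φ : A →+* B)
variable {X Y N : Type u} [AddCommGroup X] [Module A X] [AddCommGroup Y] [Module A Y]
  [AddCommGroup N] [Module B N]

noncomputable def mk : TensorProduct ℤ B X →ₗ[B] TensorB φ X := (TensorRel φ X).mkQ

theorem mk_surjective : Function.Surjective (mk φ (X := X)) :=
  Submodule.mkQ_surjective _

theorem mk_mul_tmul (b : B) (a : A) (x : X) :
    mk φ ((b * φ a) ⊗ₜ[ℤ] x) = mk φ (b ⊗ₜ[ℤ] (a • x)) :=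
  (Submodule.Quotient.eq _).mpr (Submodule.subset_span ⟨b, a, x, rfl⟩)

noncomputable def ι : X →ₛₗ[φ] TensorB φ X where
  toFun x := mk φ ((1 : B) ⊗ₜ[ℤ] x)
  map_add' x y := by rw [TensorProduct.tmul_add, map_add]
  map_smul' a x := by
    rw [← mk_mul_tmul, one_mul, ← map_smul, TensorProduct.smul_tmul', smul_eq_mul, mul_one]

theorem mk_tmul (b : B) (x : X) : mk φ (b ⊗ₜ[ℤ] x) = b • ι φ x := by
  change _ = b • mk φ ((1 : B) ⊗ₜ[ℤ] x)
  rw [← map_smul, TensorProduct.smul_tmul', smul_eq_mul, mul_one]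

theorem span_range_ι : Submodule.span B (Set.range (ι φ (X := X))) = ⊤ := by
  refine Submodule.eq_top_iff'.mpr fun y => ?_
  obtain ⟨t, rfl⟩ := mk_surjective φ y
  induction t using TensorProduct.induction_on with
  | zero => rw [map_zero]; exact zero_mem _
  | tmul b x =>
    rw [mk_tmul]
    exact Submodule.smul_mem _ b (Submodule.subset_span ⟨x, rfl⟩)
  | add s t hs ht => rw [map_add]; exact add_mem hs ht

theorem hom_ext {f g : TensorB φ X →ₗ[B] N} (h : ∀ x, f (ι φ x) = g (ι φ x)) : f = g :=
  LinearMap.ext_on_range (span_range_ι φ) h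

noncomputable def lift (g : X →ₛₗ[φ] N) : TensorB φ X →ₗ[B] N :=
  (TensorRel φ X).liftQ
    (TensorProduct.AlgebraTensorModule.lift
      (LinearMap.toSpanSingleton B (X →ₗ[ℤ] N) g.toAddMonoidHom.toIntLinearMap))
    (by
      rw [TensorRel, Submodule.span_le]
      rintro _ ⟨b, a, x, rfl⟩
      simp [mul_smul])

@[simp]
theorem lift_ι (g : X →ₛₗ[φ] N) (x : X) : lift φ g (ι φ x) = g x := by
  change (TensorRel φ X).liftQ _ _ (Submodule.Quotient.mk _) = _
  rw [Submodule.liftQ_apply]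
  simp

theorem tmap_ι (f : X →ₗ[A] Y) (x : X) : tmap φ f (ι φ x) = ι φ (f x) := by
  change (TensorRel φ X).mapQ _ _ _ (Submodule.Quotient.mk _) = Submodule.Quotient.mk _
  rw [Submodule.mapQ_apply]
  simp [tmapAux]

variable {M P : Type u} [AddCommGroup M] [Module A M] [AddCommGroup P] [Module A P]

theorem tmap_surjective {f : P →ₗ[A] M} (hf : Function.Surjective f) :
    Function.Surjective (tmap φ f) := by
  rw [← LinearMap.range_eq_top, eq_top_iff, ← span_range_ι, Submodule.span_le]
  rintro _ ⟨m, rfl⟩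
  obtain ⟨p, rfl⟩ := hf m
  exact ⟨ι φ p, tmap_ι φ f p⟩

theorem ker_tmap_le {f : P →ₗ[A] M} (hf : Function.Surjective f) :
    LinearMap.ker (tmap φ f) ≤ Submodule.span B (ι φ '' (LinearMap.ker f : Set P)) := by
  set K := Submodule.span B (ι φ '' (LinearMap.ker f : Set P))
  let g : M →ₛₗ[φ] TensorB φ P ⧸ K :=
    (LinearMap.ker f).liftQ (K.mkQ.comp (ι φ))
        (fun p hp => (Submodule.Quotient.mk_eq_zero K).mpr (Submodule.subset_span ⟨p, hp, rfl⟩))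
      ∘ₛₗ (f.quotKerEquivOfSurjective hf).symm.toLinearMap
  have hg : (lift φ g).comp (tmap φ f) = K.mkQ := by
    refine hom_ext φ fun p => ?_
    have : (f.quotKerEquivOfSurjective hf).symm (f p) = Submodule.Quotient.mk p := by
      rw [LinearEquiv.symm_apply_eq, LinearMap.quotKerEquivOfSurjective_apply_mk]
    simp [g, tmap_ι, this]
    rfl
  intro x hx
  rw [← Submodule.Quotient.mk_eq_zero, ← Submodule.mkQ_apply, ← hg, LinearMap.comp_apply,
    LinearMap.mem_ker.mp hx, map_zero]

theorem ι_mem_jacobson_smul_top (hrad : ∀ a ∈ Ring.jacobson A, φ a ∈ Ring.jacobson B)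
    {p : P}
    (hp : p ∈ Ring.jacobson A • (⊤ : Submodule A P)) :
    ι φ p ∈ Ring.jacobson B • (⊤ : Submodule B (TensorB φ P)) := by
  refine Submodule.smul_induction_on (p := fun p => ι φ p ∈ _) hp (fun a ha q _ => ?_)
    fun x y hx hy => by rw [map_add]; exact add_mem hx hy
  rw [map_smulₛₗ]
  exact Submodule.smul_mem_smul (hrad a ha) trivial

theorem projective (hP : Module.Projective A P) : Module.Projective B (TensorB φ P) := by
  obtain ⟨s, hs⟩ := Module.projective_def'.mp hP
  let coeff : (P →₀ A) →ₛₗ[φ] (TensorB φ P →₀ B) :=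
    Finsupp.lmapDomain B B (ι φ) ∘ₛₗ Finsupp.mapRange.linearMap φ.toSemilinearMap
  have hcoeff :
      Finsupp.linearCombination B id ∘ₛₗ coeff = ι φ ∘ₛₗ Finsupp.linearCombination A id :=
    Finsupp.lhom_ext fun p a => by simp [coeff]
  refine Module.projective_def'.mpr ⟨lift φ (coeff ∘ₛₗ s), hom_ext φ fun p => ?_⟩
  have := congrArg (fun g => g (s p)) hcoeff
  simp only [LinearMap.comp_apply] at this
  simp [this, ← LinearMap.comp_apply (Finsupp.linearCombination A id) s, hs]

end TensorB

theorem statement_7_general {A B : Type u} [Ring A] [Ring B] (φ : A →+* B)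
    (hrad : ∀ a ∈ jac A, φ a ∈ jac B)
    (hTn : IsLeftTNilpotent (jac B : Set B))
    (M P : Type u) [AddCommGroup M] [Module A M] [AddCommGroup P] [Module A P]
    (f : P →ₗ[A] M) (hf : IsProjectiveCover A M f) :
    ((∀ x : TensorB φ M, x = 0) ↔ (∀ x : TensorB φ P, x = 0)) ∧
      ((∃ x : TensorB φ M, x ≠ 0) →
        IsProjectiveCover B (TensorB φ M) (tmap φ f)) := by
  obtain ⟨hP, hf_surj, hker⟩ := hf
  rw [jac_eq_jacobson, jac_eq_jacobson] at hrad
  rw [jac_eq_jacobson] at hTn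
  have hker_le : LinearMap.ker (tmap φ f) ≤ Ring.jacobson B • ⊤ := by
    refine (TensorB.ker_tmap_le φ hf_surj).trans (Submodule.span_le.mpr ?_)
    rintro _ ⟨k, hk, rfl⟩
    exact TensorB.ι_mem_jacobson_smul_top φ hrad
      (hP.jacobson_le_jacobson_smul_top (hker.le_jacobson hk))
  have hsup : Superfluous B (TensorB φ P) (LinearMap.ker (tmap φ f)) :=
    hTn.superfluous_smul_top.mono hker_le
  refine ⟨⟨fun hM x => ?_, fun hP' y => ?_⟩, fun _ => ⟨TensorB.projective φ hP,
    TensorB.tmap_surjective φ hf_surj, hsup⟩⟩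
  · have hbot := hsup ⊥ (by rw [sup_bot_eq, eq_top_iff]; exact fun x _ => hM _)
    exact (Submodule.eq_bot_iff _).mp hbot.symm x trivial
  · obtain ⟨x, rfl⟩ := TensorB.tmap_surjective φ hf_surj y
    rw [hP' x, map_zero]

/-- Induction along a radical-preserving homomorphism with left
T-nilpotent target radical preserves projective covers of arbitrary modules. -/
theorem statement_7 {A B : Type u} [Ring A] [Ring B] (φ : A →+* B)
    (hrad : ∀ a ∈ jac A, φ a ∈ jac B)
    (hTn : IsLeftTNilpotent (jac B : Set B))
    (M P : Type u) [AddCommGroup M] [Module A M] [AddCommGroup P] [Module A P]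
    (hM : ∃ m : M, m ≠ 0)
    (f : P →ₗ[A] M) (hf : IsProjectiveCover A M f) :
    ((∀ x : TensorB φ M, x = 0) ↔ (∀ x : TensorB φ P, x = 0)) ∧
      ((∃ x : TensorB φ M, x ≠ 0) →
        IsProjectiveCover B (TensorB φ M) (tmap φ f)) :=
  statement_7_general φ hrad hTn M P f hf
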